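/- Let V be a finite-dimensional symplectic vector space. For every 1-dimensional subspace p of V there exists a 3-dimensional subspace π with dim Rad(π) = 1 such that p ⊆ π and p ≠ Rad(π). -/

import Mathlib

/-!
Write `p = K ∙ v`. Nondegeneracy gives `w` with `Φ v w ≠ 0`, and since `dim V ≥ 3` there is
`u ≠ 0` orthogonal to both `v` and `w`. Take `π = span {v, w, u}`. For `x = a v + b w + c u`
one has `Φ v x = b Φ v w` and `Φ w x = -a Φ v w`, so `Rad π = K ∙ u`; it does not contain `v`
because `Φ v w ≠ 0`.
-/

open Module Submodule

theorem Submodule.exists_ne_zero_eq_span_singleton_of_finrank_eq_one {K V : Type*} [Field K]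
    [AddCommGroup V] [Module K V] {p : Submodule K V} (hp : finrank K p = 1) :
    ∃ v ≠ 0, p = K ∙ v := by
  have : FiniteDimensional K p := Module.finite_of_finrank_eq_succ hp
  obtain ⟨⟨v, hvp⟩, hv0⟩ := Module.finrank_pos_iff_exists_ne_zero.mp (hp ▸ one_pos)
  have hv0 : v ≠ 0 := by simpa using hv0
  refine ⟨v, hv0, (eq_of_le_of_finrank_le ((span_singleton_le_iff_mem v p).mpr hvp) ?_).symm⟩
  rw [hp, finrank_span_singleton hv0]

namespace LinearMap.BilinForm

variable {K V : Type*} [Field K] [AddCommGroup V] [Module K V]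

theorem exists_ne_zero_apply_eq_zero_of_three_le_finrank (B : LinearMap.BilinForm K V)
    (hV : 3 ≤ finrank K V) (v w : V) : ∃ u ≠ 0, B v u = 0 ∧ B w u = 0 := by
  have : FiniteDimensional K V := Module.finite_of_finrank_pos (by omega)
  have hker : ker ((B v).prod (B w)) ≠ ⊥ := ker_ne_bot_of_finrank_lt
    (by simp only [finrank_prod, finrank_self, Nat.reduceAdd]; omega)
  obtain ⟨u, hu, hu0⟩ := exists_mem_ne_zero_of_ne_bot hker
  simp only [mem_ker, prod_apply, Function.prod, Prod.mk_eq_zero] at hu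
  exact ⟨u, hu0, hu⟩

variable {B : LinearMap.BilinForm K V} {v w u : V}

theorem IsAlt.coeff_eq_zero_of_apply_eq_zero (hB : B.IsAlt) (hvw : B v w ≠ 0)
    (hvu : B v u = 0) (hwu : B w u = 0) {a b c : K}
    (hv : B v (a • v + b • w + c • u) = 0) (hw : B w (a • v + b • w + c • u) = 0) :
    a = 0 ∧ b = 0 := by
  simp only [map_add, map_smul, hB.self_eq_zero, smul_eq_mul, mul_zero, zero_add, hvu, add_zero,
    mul_eq_zero, hvw, or_false, ← LinearMap.IsAlt.neg hB v w, mul_neg, hwu, neg_eq_zero] at hv hw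
  exact ⟨hw, hv⟩

theorem IsAlt.linearIndependent_of_apply_eq_zero (hB : B.IsAlt) (hvw : B v w ≠ 0)
    (hvu : B v u = 0) (hwu : B w u = 0) (hu : u ≠ 0) : LinearIndependent K ![v, w, u] := by
  rw [Fintype.linearIndependent_iff]
  intro g hg
  simp only [Fin.sum_univ_three, Matrix.cons_val] at hg
  obtain ⟨h0, h1⟩ := hB.coeff_eq_zero_of_apply_eq_zero hvw hvu hwu
    (by rw [hg, map_zero]) (by rw [hg, map_zero])
  have h2 : g 2 = 0 := by simpa [h0, h1, hu] using hg
  intro i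
  fin_cases i <;> assumption

theorem IsAlt.span_inf_orthogonal_span_eq (hB : B.IsAlt) (hvw : B v w ≠ 0)
    (hvu : B v u = 0) (hwu : B w u = 0) :
    span K (Set.range ![v, w, u]) ⊓ B.orthogonal (span K (Set.range ![v, w, u])) = K ∙ u := by
  apply le_antisymm
  · rintro x ⟨hxπ, hxB⟩
    obtain ⟨c, rfl⟩ := (mem_span_range_iff_exists_fun K).mp hxπ
    simp only [Fin.sum_univ_three, Matrix.cons_val] at hxB ⊢
    obtain ⟨h0, h1⟩ := hB.coeff_eq_zero_of_apply_eq_zero hvw hvu hwu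
      (hxB v (subset_span ⟨0, rfl⟩)) (hxB w (subset_span ⟨1, rfl⟩))
    simpa [h0, h1] using smul_mem _ (c 2) (mem_span_singleton_self u)
  · have huB : span K (Set.range ![v, w, u]) ≤ ker (B.flip u) := by
      rw [span_le, Set.range_subset_iff]
      intro i
      fin_cases i <;> simp [hvu, hwu, hB.self_eq_zero]
    rw [span_singleton_le_iff_mem]
    exact ⟨subset_span ⟨2, rfl⟩, fun n hn => huB hn⟩

end LinearMap.BilinForm

theorem point_in_tangential_plane_off_radical_general
    {K V : Type*} [Field K] [AddCommGroup V] [Module K V]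
    (Φ : LinearMap.BilinForm K V) (hnd : Φ.Nondegenerate) (halt : Φ.IsAlt)
    (hV : 4 ≤ Module.finrank K V)
    (p : Submodule K V) (hp : Module.finrank K p = 1) :
    ∃ π : Submodule K V, Module.finrank K π = 3 ∧
      Module.finrank K ↥(π ⊓ Φ.orthogonal π) = 1 ∧
      p ≤ π ∧ p ≠ π ⊓ Φ.orthogonal π := by
  obtain ⟨v, hv0, rfl⟩ := exists_ne_zero_eq_span_singleton_of_finrank_eq_one hp
  obtain ⟨w, hvw⟩ : ∃ w, Φ v w ≠ 0 := not_forall.mp fun h => hv0 (hnd.1 v h)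
  obtain ⟨u, hu0, hvu, hwu⟩ :=
    Φ.exists_ne_zero_apply_eq_zero_of_three_le_finrank (by omega) v w
  have hrad := halt.span_inf_orthogonal_span_eq hvw hvu hwu
  refine ⟨span K (Set.range ![v, w, u]), ?_, ?_, ?_, ?_⟩
  · rw [finrank_span_eq_card (halt.linearIndependent_of_apply_eq_zero hvw hvu hwu hu0)]
    simp
  · rw [hrad, finrank_span_singleton hu0]
  · exact (span_singleton_le_iff_mem _ _).mpr (subset_span ⟨0, rfl⟩)
  · intro h
    have hwv : Φ w v = 0 := (h.le (mem_span_singleton_self v)).2 w (subset_span ⟨1, rfl⟩)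
    exact hvw (halt.eq_iff.mpr hwv)

theorem point_in_tangential_plane_off_radical
    {K V : Type*} [Field K] [AddCommGroup V] [Module K V] [FiniteDimensional K V]
    (Φ : LinearMap.BilinForm K V) (hnd : Φ.Nondegenerate) (halt : Φ.IsAlt)
    (hchar : (2 : K) ≠ 0) (hV : 4 ≤ Module.finrank K V)
    (p : Submodule K V) (hp : Module.finrank K p = 1) :
    ∃ π : Submodule K V, Module.finrank K π = 3 ∧
      Module.finrank K ↥(π ⊓ Φ.orthogonal π) = 1 ∧
      p ≤ π ∧ p ≠ π ⊓ Φ.orthogonal π :=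
  point_in_tangential_plane_off_radical_general Φ hnd halt hV p hp
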